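/- arXiv:0807.2987 — 2 statements merged into one kernel-verified Lean document; each statement's English description precedes it below -/
import Mathlib

section
/- Let ℙ be a translation-invariant Borel probability measure on Ω, let m ∈ ℕ, and let A ⊆ 𝕋 satisfy the growth property, with {ω : T_z^ω ∈ A} measurable for every z ∈ ℤ₊². Set Ω_m = {ω ∈ Ω : γ_{(m,1)}^ω = ((0,0),(1,0),…,(m,0),(m,1))}. Then ℙ(T_{(m,1)} ∈ A and Ω_m) ≤ ℙ(T_{(1,1)} ∈ A and Ω_1). -/
open scoped NNReal

/-- A site of the lattice `ℤ²`. -/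
abbrev Site : Type := ℤ × ℤ

/-- The positive quadrant `ℤ₊²`. -/
def posQuad : Set Site := {z : Site | 0 ≤ z.1 ∧ 0 ≤ z.2}

/-- An admissible (up-right) step. -/
def IsStep (u v : Site) : Prop := v = u + (1, 0) ∨ v = u + (0, 1)

/-- `γ` is an up-right path from `(0,0)` to `z`, i.e. `γ ∈ Γ_z`. -/
def IsPathTo (z : Site) (γ : List Site) : Prop :=
  γ.head? = some ((0, 0) : Site) ∧ γ.getLast? = some z ∧ γ.Chain' IsStep

/-- The length `ω(γ) = Σ_{z ∈ γ} ω(z)` of a path `γ` under the configuration `ω`. -/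
noncomputable def plen (ω : Site → ℝ) (γ : List Site) : ℝ := (γ.map ω).sum

/-- `γ ∈ Γ_z` is `ω`-optimal if its length is maximal over `Γ_z`. -/
def IsOptimal (ω : Site → ℝ) (z : Site) (γ : List Site) : Prop :=
  IsPathTo z γ ∧ ∀ γ' : List Site, IsPathTo z γ' → plen ω γ' ≤ plen ω γ

/-- `γ` is below `γ'`: at every step index, the second coordinate of the site of `γ`
is at most that of the corresponding site of `γ'`. -/
def Below (γ γ' : List Site) : Prop :=
  ∀ (i : ℕ) (h : i < γ.length) (h' : i < γ'.length),
    (γ.get ⟨i, h⟩).2 ≤ (γ'.get ⟨i, h'⟩).2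

/-- `γ` is the low-optimal path of `Γ_z`: it is `ω`-optimal and below every
`ω`-optimal path of `Γ_z`. -/
def IsLowOptimal (ω : Site → ℝ) (z : Site) (γ : List Site) : Prop :=
  IsOptimal ω z γ ∧ ∀ γ' : List Site, IsOptimal ω z γ' → Below γ γ'

open Classical in
/-- The low-optimal path `γ_z^ω` (an arbitrary default when it does not exist). -/
noncomputable def lowOpt (ω : Site → ℝ) (z : Site) : List Site :=
  if h : ∃ γ : List Site, IsLowOptimal ω z γ then h.choose else []

/-- The vertex set `V(T_z^ω) = {z' ∈ ℤ₊² : z ∈ γ_{z'}^ω}` of the subtree rooted at `z`. -/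
def treeV (ω : Site → ℝ) (z : Site) : Set Site :=
  {z' : Site | z' ∈ posQuad ∧ z ∈ lowOpt ω z'}

/-- A (rooted) subtree of the last passage percolation tree, recorded by its root
and its vertex set. -/
structure LPPTree where
  root : Site
  verts : Set Site

/-- The subtree `T_z^ω` of the last passage percolation tree rooted at `z`. -/
def subtree (ω : Site → ℝ) (z : Site) : LPPTree := ⟨z, treeV ω z⟩

/-- The set `𝕋` of all subtrees `T_z^ω`, `z ∈ ℤ₊²`, `ω ∈ Ω`. -/
def TreeSet : Set LPPTree :=
  {T : LPPTree | ∃ (ω : Site → ℝ) (z : Site),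
    (∀ s : Site, 0 ≤ ω s) ∧ z ∈ posQuad ∧ T = subtree ω z}

/-- A set `A ⊆ 𝕋` satisfies the growth property if whenever `T ∈ A`, `T' ∈ 𝕋` and
`V(T) - r(T) ⊆ V(T') - r(T')`, then `T' ∈ A`. -/
def GrowthProperty (A : Set LPPTree) : Prop :=
  ∀ T ∈ A, ∀ T' ∈ TreeSet,
    (· - T.root) '' T.verts ⊆ (· - T'.root) '' T'.verts → T' ∈ A

/-- A point of the configuration space `Ω = [0,∞)^{ℤ²}`. -/
abbrev CfgNN : Type := Site → ℝ≥0

/-- The real-valued configuration associated to a point of `Ω`. -/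
noncomputable def toCfg (ω : CfgNN) : Site → ℝ := fun z => (ω z : ℝ)

/-- The translation operator `τ_a(ω) = ω(a + ·)` on `Ω`. -/
def shift (a : Site) (ω : CfgNN) : CfgNN := fun z => ω (a + z)

/-- The path `((0,0), (1,0), …, (m,0), (m,1))`. -/
def axisPath (m : ℕ) : List Site :=
  ((List.range (m + 1)).map fun i => ((i : ℤ), 0)) ++ [((m : ℤ), 1)]

/-- The event `Ω_m = {ω : γ_{(m,1)}^ω = ((0,0),(1,0),…,(m,0),(m,1))}`. -/
def OmegaM (m : ℕ) : Set CfgNN :=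
  {ω : CfgNN | lowOpt (toCfg ω) ((m : ℤ), 1) = axisPath m}

open MeasureTheory

/-!
On `Ω_m` the low-optimal path to `(m,1)` runs along the axis. Prefixes and suffixes of a
low-optimal path are low-optimal, so every low-optimal path through `(m,1)` starts with this
axis path, and its suffix from `(m-1,0)`, translated by `-(m-1,0)`, is the low-optimal path of the
shifted configuration `τ_{(m-1,0)} ω`; that suffix passes through `(1,1)`. Hence
`V(T_{(m,1)}^ω) - (m,1) ⊆ V(T_{(1,1)}^{τω}) - (1,1)` and `τω ∈ Ω_1`, so by the growth property
the event on the left is contained in `τ⁻¹` of the event on the right, and translation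
invariance concludes.
-/

/-- Generalizes `IsPathTo`, which is `IsPath (0,0)` by definition. -/
def IsPath (a z : Site) (γ : List Site) : Prop :=
  γ.head? = some a ∧ γ.getLast? = some z ∧ γ.IsChain IsStep

def IsOptimalPath (ω : Site → ℝ) (a z : Site) (γ : List Site) : Prop :=
  IsPath a z γ ∧ ∀ γ' : List Site, IsPath a z γ' → plen ω γ' ≤ plen ω γ

def IsLowOptimalPath (ω : Site → ℝ) (a z : Site) (γ : List Site) : Prop :=
  IsOptimalPath ω a z γ ∧ ∀ γ' : List Site, IsOptimalPath ω a z γ' → Below γ γ'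

lemma IsStep.le {u v : Site} (h : IsStep u v) : u ≤ v := by
  rcases h with rfl | rfl <;> simp [Prod.le_def]

lemma IsStep.sum_eq {u v : Site} (h : IsStep u v) : v.1 + v.2 = u.1 + u.2 + 1 := by
  rcases h with rfl | rfl <;> simp <;> ring

namespace IsPath

variable {a b z : Site} {α β γ : List Site}

lemma ne_nil (h : IsPath a z γ) : γ ≠ [] := by
  rintro rfl
  simp [IsPath] at h

lemma le (h : IsPath a z γ) : a ≤ z := by
  obtain ⟨x, l, rfl⟩ := List.exists_cons_of_ne_nil h.ne_nil
  obtain ⟨hhead, hlast, hchain⟩ := h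
  obtain rfl : x = a := by simpa using hhead
  have hpw := List.pairwise_cons.1 (List.isChain_iff_pairwise.1 (hchain.imp fun _ _ => IsStep.le))
  rcases List.mem_cons.1 (List.mem_of_getLast? hlast) with rfl | hz
  exacts [le_rfl, hpw.1 z hz]

lemma getElem_sum (h : IsPath a z γ) (i : ℕ) (hi : i < γ.length) :
    (γ[i]).1 + (γ[i]).2 = a.1 + a.2 + i := by
  induction i with
  | zero =>
    have : γ[0] = a := by simpa [List.head?_eq_getElem?, List.getElem?_eq_getElem hi] using h.1
    simp [this]
  | succ i ih =>
    rw [(List.isChain_iff_getElem.1 h.2.2 i hi).sum_eq, ih (by omega)]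
    push_cast
    ring

lemma length_eq (h : IsPath a z γ) : (γ.length : ℤ) = z.1 + z.2 - (a.1 + a.2) + 1 := by
  have hpos := List.length_pos_iff.2 h.ne_nil
  have hlast : γ[γ.length - 1] = z := by
    simpa [List.getLast?_eq_getElem?, List.getElem?_eq_getElem (by omega : γ.length - 1 < γ.length)]
      using h.2.1
  have := h.getElem_sum (γ.length - 1) (by omega)
  rw [hlast] at this
  omega

lemma append_congr {α' β' : List Site} (h : IsPath a z (α ++ β))
    (hα₁ : α'.head? = α.head?) (hα₂ : α'.getLast? = α.getLast?) (hα : α'.IsChain IsStep)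
    (hβ₁ : β'.head? = β.head?) (hβ₂ : β'.getLast? = β.getLast?) (hβ : β'.IsChain IsStep) :
    IsPath a z (α' ++ β') := by
  obtain ⟨hhead, hlast, hchain⟩ := h
  rw [List.isChain_append] at hchain
  refine ⟨?_, ?_, List.isChain_append.2 ⟨hα, hβ, ?_⟩⟩
  · rwa [List.head?_append, hα₁, hβ₁, ← List.head?_append]
  · rwa [List.getLast?_append, hα₂, hβ₂, ← List.getLast?_append]
  · rw [hα₂, hβ₁]
    exact hchain.2.2

lemma of_append_left (h : IsPath a z (α ++ β)) (hα : α.getLast? = some b) : IsPath a b α := by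
  have hne : α ≠ [] := by rintro rfl; simp at hα
  refine ⟨?_, hα, (List.isChain_append.1 h.2.2).1⟩
  simpa [List.head?_append, List.head?_eq_none_iff, hne] using h.1

lemma of_append_right (h : IsPath a z (α ++ β)) (hβ : β.head? = some b) : IsPath b z β := by
  have hne : β ≠ [] := by rintro rfl; simp at hβ
  refine ⟨hβ, ?_, (List.isChain_append.1 h.2.2).2.1⟩
  simpa [List.getLast?_append, List.getLast?_eq_none_iff, hne] using h.2.1

lemma map_add (h : IsPath a z γ) (t : Site) : IsPath (t + a) (t + z) (γ.map (t + ·)) := by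
  refine ⟨by simp [h.1], by simp [h.2.1], (List.isChain_map _).2 (h.2.2.imp ?_)⟩
  rintro u v (rfl | rfl) <;> simp [IsStep, add_assoc]

lemma mem_posQuad (h : IsPath 0 z γ) : z ∈ posQuad :=
  Prod.le_def.1 h.le

end IsPath

lemma Below.of_append_left {α β α' β' : List Site} (h : Below (α ++ β) (α' ++ β')) :
    Below α α' := by
  intro i hi hi'
  simpa [List.getElem_append_left hi, List.getElem_append_left hi'] using
    h i (by simp; omega) (by simp; omega)

lemma Below.of_append_right {α β β' : List Site} (h : Below (α ++ β) (α ++ β')) :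
    Below β β' := by
  intro i hi hi'
  simpa [List.getElem_append_right] using
    h (α.length + i) (by simp; omega) (by simp; omega)

lemma Below.of_map_add {γ γ' : List Site} {t : Site}
    (h : Below (γ.map (t + ·)) (γ'.map (t + ·))) : Below γ γ' := by
  intro i hi hi'
  simpa using h i (by simpa using hi) (by simpa using hi')

lemma plen_append (ω : Site → ℝ) (α β : List Site) :
    plen ω (α ++ β) = plen ω α + plen ω β := by
  simp [plen]

lemma plen_map_add (ω : Site → ℝ) (t : Site) (γ : List Site) :
    plen ω (γ.map (t + ·)) = plen (fun s => ω (t + s)) γ := by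
  simp [plen, Function.comp_def]

namespace IsLowOptimalPath

variable {ω : Site → ℝ} {a b z : Site} {α β γ : List Site}

lemma left_of_append (h : IsLowOptimalPath ω a z (α ++ β)) (hα : IsPath a b α) :
    IsLowOptimalPath ω a b α := by
  -- Splicing a competitor `δ` in place of `α` gives a competitor of `α ++ β`, and an optimal `δ`
  -- has the same length as `α`.
  have splice : ∀ δ, IsPath a b δ → IsPath a z (δ ++ β) := fun δ hδ =>
    h.1.1.append_congr (by rw [hδ.1, hα.1]) (by rw [hδ.2.1, hα.2.1]) hδ.2.2 rfl rfl
      (List.isChain_append.1 h.1.1.2.2).2.1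
  have hopt : IsOptimalPath ω a b α := ⟨hα, fun δ hδ => by
    have := h.1.2 _ (splice δ hδ)
    rw [plen_append, plen_append] at this
    linarith⟩
  refine ⟨hopt, fun δ hδ => Below.of_append_left (h.2 (δ ++ β) ⟨splice δ hδ.1, fun γ' hγ' => ?_⟩)⟩
  have := h.1.2 γ' hγ'
  have := hδ.2 α hα
  rw [plen_append] at *
  linarith [hopt.2 δ hδ.1]

lemma right_of_append (h : IsLowOptimalPath ω a z (α ++ β)) (hβ : IsPath b z β) :
    IsLowOptimalPath ω b z β := by
  have splice : ∀ δ, IsPath b z δ → IsPath a z (α ++ δ) := fun δ hδ =>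
    h.1.1.append_congr rfl rfl (List.isChain_append.1 h.1.1.2.2).1
      (by rw [hδ.1, hβ.1]) (by rw [hδ.2.1, hβ.2.1]) hδ.2.2
  have hopt : IsOptimalPath ω b z β := ⟨hβ, fun δ hδ => by
    have := h.1.2 _ (splice δ hδ)
    rw [plen_append, plen_append] at this
    linarith⟩
  refine ⟨hopt, fun δ hδ => Below.of_append_right (h.2 (α ++ δ) ⟨splice δ hδ.1, fun γ' hγ' => ?_⟩)⟩
  have := h.1.2 γ' hγ'
  have := hδ.2 β hβ
  rw [plen_append] at *
  linarith [hopt.2 δ hδ.1]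

lemma of_map_add {t : Site} (h : IsLowOptimalPath ω (t + a) (t + z) (γ.map (t + ·))) :
    IsLowOptimalPath (fun s => ω (t + s)) a z γ := by
  have hγ : IsPath a z γ := by
    simpa [Function.comp_def] using h.1.1.map_add (-t)
  have hopt : IsOptimalPath (fun s => ω (t + s)) a z γ := ⟨hγ, fun δ hδ => by
    simpa only [plen_map_add] using h.1.2 _ (hδ.map_add t)⟩
  refine ⟨hopt, fun δ hδ => Below.of_map_add (h.2 _ ⟨hδ.1.map_add t, fun γ' hγ' => ?_⟩)⟩
  rw [plen_map_add, le_antisymm (hopt.2 δ hδ.1) (hδ.2 γ hγ), ← plen_map_add]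
  exact h.1.2 γ' hγ'

lemma unique {γ' : List Site} (h : IsLowOptimalPath ω a z γ) (h' : IsLowOptimalPath ω a z γ') :
    γ = γ' := by
  have hlen : γ.length = γ'.length := by
    have := h.1.1.length_eq
    have := h'.1.1.length_eq
    omega
  -- `Below` both ways forces equal second coordinates, and the coordinate sum of the `i`-th site
  -- of either path is `a.1 + a.2 + i`.
  refine List.ext_getElem hlen fun i hi hi' => Prod.ext ?_ ?_
  all_goals
    have h₁ := h.2 γ' h'.1 i hi hi'
    have h₂ := h'.2 γ h.1 i hi' hi
    have s₁ := h.1.1.getElem_sum i hi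
    have s₂ := h'.1.1.getElem_sum i hi'
    simp only [List.get_eq_getElem] at h₁ h₂
    omega

end IsLowOptimalPath

lemma lowOpt_eq {ω : Site → ℝ} {z : Site} {γ : List Site} (h : IsLowOptimalPath ω 0 z γ) :
    lowOpt ω z = γ := by
  have hex : ∃ γ', IsLowOptimal ω z γ' := ⟨γ, h⟩
  rw [lowOpt, dif_pos hex]
  exact IsLowOptimalPath.unique hex.choose_spec h

lemma isLowOptimalPath_lowOpt {ω : Site → ℝ} {z : Site} (h : lowOpt ω z ≠ []) :
    IsLowOptimalPath ω 0 z (lowOpt ω z) := by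
  by_cases hex : ∃ γ, IsLowOptimal ω z γ
  · rw [lowOpt, dif_pos hex]
    exact hex.choose_spec
  · rw [lowOpt, dif_neg hex] at h
    exact absurd rfl h

lemma mem_posQuad_of_lowOpt_ne_nil {ω : Site → ℝ} {z : Site} (h : lowOpt ω z ≠ []) :
    z ∈ posQuad :=
  (isLowOptimalPath_lowOpt h).1.1.mem_posQuad

lemma lowOpt_eq_append_of_mem {ω : Site → ℝ} {u z : Site} (h : u ∈ lowOpt ω z) :
    ∃ β, lowOpt ω z = lowOpt ω u ++ β := by
  have hlo := isLowOptimalPath_lowOpt (List.ne_nil_of_mem h)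
  obtain ⟨α, β, hsplit⟩ := List.append_of_mem h
  rw [← List.singleton_append, ← List.append_assoc] at hsplit
  rw [hsplit] at hlo ⊢
  have hpre : IsPath 0 u (α ++ [u]) := hlo.1.1.of_append_left (by simp)
  exact ⟨β, by rw [lowOpt_eq (hlo.left_of_append hpre)]⟩

lemma lowOpt_shift_of_eq_append {ω : Site → ℝ} {z t : Site} {α γ : List Site}
    (h : lowOpt ω z = α ++ γ.map (t + ·)) (hγ : γ.head? = some 0) :
    lowOpt (fun s => ω (t + s)) (z - t) = γ := by
  have hγne : γ ≠ [] := by rintro rfl; simp at hγ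
  have hlo := isLowOptimalPath_lowOpt (ω := ω) (z := z) (by simp [h, hγne])
  rw [h] at hlo
  have hsuf : IsPath (t + 0) z (γ.map (t + ·)) := hlo.1.1.of_append_right (by simp [hγ])
  have := hlo.right_of_append hsuf
  rw [← add_sub_cancel t z] at this
  exact lowOpt_eq (IsLowOptimalPath.of_map_add this)

lemma axisPath_one : axisPath 1 = [(0, 0), (1, 0), (1, 1)] := by
  simp [axisPath, List.range_succ]

lemma axisPath_succ (k : ℕ) :
    axisPath (k + 1) =
      (List.range k).map (fun i => ((i : ℤ), (0 : ℤ))) ++ (axisPath 1).map (((k : ℤ), 0) + ·) := by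
  simp [axisPath, List.range_succ]

lemma exists_lowOpt_shift_eq_axisPath_one_append {ω : Site → ℝ} {k : ℕ} {z : Site}
    (hΩ : lowOpt ω (((k + 1 : ℕ) : ℤ), 1) = axisPath (k + 1))
    (hz : (((k + 1 : ℕ) : ℤ), (1 : ℤ)) ∈ lowOpt ω z) :
    ∃ β, lowOpt ω z = axisPath (k + 1) ++ β ∧
      lowOpt (fun s => ω (((k : ℤ), 0) + s)) (z - ((k : ℤ), 0)) =
        axisPath 1 ++ β.map (· - ((k : ℤ), 0)) := by
  obtain ⟨β, hβ⟩ := lowOpt_eq_append_of_mem hz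
  rw [hΩ] at hβ
  refine ⟨β, hβ, lowOpt_shift_of_eq_append (α := (List.range k).map fun i => ((i : ℤ), 0)) ?_
    (by simp [axisPath_one])⟩
  rw [hβ, axisPath_succ]
  simp [Function.comp_def]

lemma lowOpt_shift_eq_axisPath_one {ω : Site → ℝ} {k : ℕ}
    (hΩ : lowOpt ω (((k + 1 : ℕ) : ℤ), 1) = axisPath (k + 1)) :
    lowOpt (fun s => ω (((k : ℤ), 0) + s)) (1, 1) = axisPath 1 := by
  have hmem : (((k + 1 : ℕ) : ℤ), (1 : ℤ)) ∈ lowOpt ω (((k + 1 : ℕ) : ℤ), 1) := by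
    rw [hΩ]
    simp [axisPath]
  obtain ⟨β, hβ, hshift⟩ := exists_lowOpt_shift_eq_axisPath_one_append hΩ hmem
  obtain rfl : β = [] := List.append_right_eq_self.1 (hβ.symm.trans hΩ)
  simpa using hshift

lemma treeV_axis_sub_subset {ω : Site → ℝ} {k : ℕ}
    (hΩ : lowOpt ω (((k + 1 : ℕ) : ℤ), 1) = axisPath (k + 1)) :
    (· - (((k + 1 : ℕ) : ℤ), 1)) '' treeV ω (((k + 1 : ℕ) : ℤ), 1) ⊆
      (· - (1, 1)) '' treeV (fun s => ω (((k : ℤ), 0) + s)) (1, 1) := by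
  rintro _ ⟨z, ⟨-, hz⟩, rfl⟩
  obtain ⟨β, -, hshift⟩ := exists_lowOpt_shift_eq_axisPath_one_append hΩ hz
  refine ⟨z - ((k : ℤ), 0), ⟨mem_posQuad_of_lowOpt_ne_nil (ω := fun s => ω (((k : ℤ), 0) + s))
    (by simp [hshift, axisPath_one]), ?_⟩, ?_⟩
  · rw [hshift]
    simp [axisPath_one]
  · ext <;> simp [sub_sub]

lemma measurable_shift (a : Site) : Measurable (shift a) :=
  measurable_pi_lambda _ fun z => measurable_pi_apply (a + z)

theorem stochastic_domination_axis_general (ℙ : Measure CfgNN)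
    (hinv : ∀ a : Site, ℙ.map (shift a) = ℙ)
    (m : ℕ) (hm : 1 ≤ m)
    (A : Set LPPTree) (hA : GrowthProperty A) :
    ℙ ({ω : CfgNN | subtree (toCfg ω) ((m : ℤ), 1) ∈ A} ∩ OmegaM m)
      ≤ ℙ ({ω : CfgNN | subtree (toCfg ω) ((1, 1) : Site) ∈ A} ∩ OmegaM 1) := by
  obtain ⟨k, rfl⟩ : ∃ k, m = k + 1 := ⟨m - 1, by omega⟩
  set a : Site := ((k : ℤ), 0)
  have hsub : {ω : CfgNN | subtree (toCfg ω) (((k + 1 : ℕ) : ℤ), 1) ∈ A} ∩ OmegaM (k + 1) ⊆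
      shift a ⁻¹' ({ω : CfgNN | subtree (toCfg ω) ((1, 1) : Site) ∈ A} ∩ OmegaM 1) := by
    rintro ω ⟨hωA, hωΩ⟩
    refine ⟨hA _ hωA _ ?_ (treeV_axis_sub_subset hωΩ), ?_⟩
    · exact ⟨_, _, fun s => (shift a ω s).coe_nonneg, by simp [posQuad], rfl⟩
    · exact lowOpt_shift_eq_axisPath_one hωΩ
  calc _ ≤ ℙ (shift a ⁻¹' _) := measure_mono hsub
    _ ≤ ℙ.map (shift a) _ := Measure.le_map_apply (measurable_shift a).aemeasurable _
    _ = _ := by rw [hinv a]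

/-- Theorem 3: for a translation-invariant probability measure `ℙ` and `A ⊆ 𝕋`
satisfying the growth property, `ℙ(T_{(m,1)} ∈ A, Ω_m) ≤ ℙ(T_{(1,1)} ∈ A, Ω_1)`. -/
theorem stochastic_domination_axis (ℙ : Measure CfgNN) [IsProbabilityMeasure ℙ]
    (hinv : ∀ a : Site, ℙ.map (shift a) = ℙ)
    (m : ℕ) (hm : 1 ≤ m)
    (A : Set LPPTree) (hA_sub : A ⊆ TreeSet) (hA : GrowthProperty A)
    (hmeas : ∀ z ∈ posQuad, MeasurableSet {ω : CfgNN | subtree (toCfg ω) z ∈ A}) :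
    ℙ ({ω : CfgNN | subtree (toCfg ω) ((m : ℤ), 1) ∈ A} ∩ OmegaM m)
      ≤ ℙ ({ω : CfgNN | subtree (toCfg ω) ((1, 1) : Site) ∈ A} ∩ OmegaM 1) :=
  stochastic_domination_axis_general ℙ hinv m hm A hA
end

section
/- Let ω ∈ Ω and ε : ℤ² → ℝ be such that ω + ε ∈ Ω (i.e. ω + ε is nonnegative). For every z ∈ ℤ₊², if the low-optimal paths γ_z^{ω+ε} and γ_z^ω are distinct, then ε(γ_z^ω) < ε(γ_z^{ω+ε}), where ε(γ) = Σ_{z'∈γ} ε(z'). -/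
/-!
Let `γ = γ_z^ω` and `η = γ_z^{ω+ε}`. Optimality gives `ω(η) ≤ ω(γ)` and
`ω(γ) + ε(γ) ≤ ω(η) + ε(η)`. If `ε(η) ≤ ε(γ)`, both are equalities, so `η` is `ω`-optimal and
`γ` is `(ω+ε)`-optimal; lowness then puts each path below the other, and two paths to `z`
below each other coincide.

Low-optimal paths exist because the pointwise minimum (in the second coordinate) of two paths
is a path, and the lengths of the pointwise minimum and maximum add up to those of the two
paths; hence optimal paths are closed under pointwise minimum.
-/

open scoped NNReal

lemma isStep_iff {u v : Site} :
    IsStep u v ↔ v.1 + v.2 = u.1 + u.2 + 1 ∧ (v.2 = u.2 ∨ v.2 = u.2 + 1) := by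
  obtain ⟨a, b⟩ := u
  obtain ⟨c, d⟩ := v
  simp only [IsStep, Prod.mk_add_mk, Prod.mk.injEq]
  omega

lemma IsStep.mem_posQuad {u v : Site} (h : IsStep u v) (hu : u ∈ posQuad) : v ∈ posQuad := by
  obtain ⟨hu₁, hu₂⟩ := hu
  rcases h with rfl | rfl <;> exact ⟨by simp; omega, by simp; omega⟩

namespace IsPathTo

variable {z : Site} {γ η : List Site}

lemma ne_nil (h : IsPathTo z γ) : γ ≠ [] := by
  rintro rfl
  simp [IsPathTo] at h

lemma length_pos (h : IsPathTo z γ) : 0 < γ.length :=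
  List.length_pos_iff.2 h.ne_nil

lemma getElem_zero (h : IsPathTo z γ) : γ[0]'h.length_pos = (0, 0) := by
  simpa [List.head?_eq_getElem?, List.getElem?_eq_getElem h.length_pos] using h.1

lemma getElem_length_sub_one (h : IsPathTo z γ) :
    γ[γ.length - 1]'(by have := h.length_pos; omega) = z := by
  have := h.length_pos
  simpa [List.getLast?_eq_getElem?, List.getElem?_eq_getElem (by omega : γ.length - 1 < γ.length)]
    using h.2.1

lemma isStep_getElem (h : IsPathTo z γ) (i : ℕ) (hi : i + 1 < γ.length) :
    IsStep (γ[i]'(by omega)) γ[i + 1] :=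
  List.isChain_iff_getElem.1 h.2.2 i hi

lemma fst_add_snd_getElem (h : IsPathTo z γ) (i : ℕ) (hi : i < γ.length) :
    γ[i].1 + γ[i].2 = i := by
  induction i with
  | zero => simp [h.getElem_zero]
  | succ i ih =>
    rw [(isStep_iff.1 (h.isStep_getElem i hi)).1, ih (by omega)]
    push_cast
    rfl

lemma getElem_mem_posQuad (h : IsPathTo z γ) (i : ℕ) (hi : i < γ.length) : γ[i] ∈ posQuad := by
  induction i with
  | zero => simp [h.getElem_zero, posQuad]
  | succ i ih => exact (h.isStep_getElem i hi).mem_posQuad (ih (by omega))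

lemma length_eq (h : IsPathTo z γ) : γ.length = (z.1 + z.2).toNat + 1 := by
  have := h.length_pos
  have hz := h.fst_add_snd_getElem (γ.length - 1) (by omega)
  rw [h.getElem_length_sub_one] at hz
  omega

lemma length_eq_length (hγ : IsPathTo z γ) (hη : IsPathTo z η) : γ.length = η.length := by
  rw [hγ.length_eq, hη.length_eq]

lemma eq_of_snd_eq (hγ : IsPathTo z γ) (hη : IsPathTo z η)
    (hs : ∀ i (hiγ : i < γ.length) (hiη : i < η.length), γ[i].2 = η[i].2) : γ = η := by
  refine List.ext_getElem (hγ.length_eq_length hη) fun i hiγ hiη => Prod.ext ?_ (hs i hiγ hiη)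
  have := hγ.fst_add_snd_getElem i hiγ
  have := hη.fst_add_snd_getElem i hiη
  have := hs i hiγ hiη
  omega

lemma below_antisymm (hγ : IsPathTo z γ) (hη : IsPathTo z η) (hγη : Below γ η)
    (hηγ : Below η γ) : γ = η :=
  hγ.eq_of_snd_eq hη fun i hiγ hiη => le_antisymm (hγη i hiγ hiη) (hηγ i hiη hiγ)

lemma append_singleton {z' : Site} (h : IsPathTo z γ) (hs : IsStep z z') :
    IsPathTo z' (γ ++ [z']) := by
  refine ⟨by rw [List.head?_append_of_ne_nil _ h.ne_nil]; exact h.1, List.getLast?_concat, ?_⟩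
  refine h.2.2.append (List.isChain_singleton _) fun x hx y hy => ?_
  rw [h.2.1, Option.mem_some_iff] at hx
  rw [List.head?_cons, Option.mem_some_iff] at hy
  exact hx ▸ hy ▸ hs

end IsPathTo

lemma exists_isPathTo {z : Site} (hz : z ∈ posQuad) : ∃ γ, IsPathTo z γ := by
  obtain ⟨hz₁, hz₂⟩ := hz
  obtain ⟨n, hn⟩ : ∃ n : ℕ, z.1 + z.2 = n := ⟨(z.1 + z.2).toNat, by omega⟩
  induction n generalizing z with
  | zero =>
    obtain rfl : z = (0, 0) := Prod.ext (by simp; omega) (by simp; omega)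
    exact ⟨[(0, 0)], rfl, rfl, List.isChain_singleton _⟩
  | succ n ih =>
    by_cases h₁ : 0 < z.1
    · obtain ⟨γ, hγ⟩ := ih (z := (z.1 - 1, z.2)) (by simp; omega) hz₂ (by simp; omega)
      exact ⟨_, hγ.append_singleton (Or.inl (by simp))⟩
    · obtain ⟨γ, hγ⟩ := ih (z := (z.1, z.2 - 1)) hz₁ (by simp; omega) (by simp; omega)
      exact ⟨_, hγ.append_singleton (Or.inr (by simp))⟩

lemma finite_setOf_isPathTo (z : Site) : {γ | IsPathTo z γ}.Finite := by
  set n := (z.1 + z.2).toNat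
  let heights (γ : List Site) (i : Fin (n + 1)) : ℤ := (γ.getD i (0, 0)).2
  have hmaps : Set.MapsTo heights {γ | IsPathTo z γ} (Set.univ.pi fun _ => Set.Icc 0 n) := by
    intro γ hγ i _
    have hi : (i : ℕ) < γ.length := by rw [hγ.length_eq]; exact i.isLt
    have hsum := hγ.fst_add_snd_getElem i hi
    have hpos := hγ.getElem_mem_posQuad i hi
    simp only [heights, List.getD_eq_getElem _ _ hi, Set.mem_Icc]
    have := hpos.1
    have := hpos.2
    have := i.isLt
    omega
  have hbox : (Set.univ.pi fun _ : Fin (n + 1) => Set.Icc (0 : ℤ) n).Finite :=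
    Set.Finite.pi fun _ => Set.finite_Icc _ _
  refine Set.Finite.of_finite_image (hbox.subset hmaps.image_subset)
    fun γ hγ η hη he => hγ.eq_of_snd_eq hη fun i hiγ hiη => ?_
  have := congrFun he ⟨i, by rw [← hγ.length_eq]; exact hiγ⟩
  simpa only [heights, List.getD_eq_getElem _ _ hiγ, List.getD_eq_getElem _ _ hiη] using this

lemma exists_isOptimal (ω : Site → ℝ) {z : Site} (hz : z ∈ posQuad) : ∃ γ, IsOptimal ω z γ := by
  obtain ⟨γ, hγ, hmax⟩ :=
    Set.exists_max_image _ (plen ω) (finite_setOf_isPathTo z) (exists_isPathTo hz)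
  exact ⟨γ, hγ, hmax⟩

def lowerSite (a b : Site) : Site := if a.2 ≤ b.2 then a else b

def upperSite (a b : Site) : Site := if a.2 ≤ b.2 then b else a

lemma lowerSite_eq_or (a b : Site) : lowerSite a b = a ∨ lowerSite a b = b := by
  unfold lowerSite; split_ifs <;> simp

lemma upperSite_eq_or (a b : Site) : upperSite a b = a ∨ upperSite a b = b := by
  unfold upperSite; split_ifs <;> simp

lemma snd_lowerSite (a b : Site) : (lowerSite a b).2 = min a.2 b.2 := by
  unfold lowerSite; split_ifs <;> omega

lemma IsStep.lowerSite {a b a' b' : Site} (hab : a.1 + a.2 = b.1 + b.2) (ha : IsStep a a')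
    (hb : IsStep b b') : IsStep (lowerSite a b) (lowerSite a' b') := by
  rw [isStep_iff] at *
  unfold _root_.lowerSite
  split_ifs <;> omega

lemma IsStep.upperSite {a b a' b' : Site} (hab : a.1 + a.2 = b.1 + b.2) (ha : IsStep a a')
    (hb : IsStep b b') : IsStep (upperSite a b) (upperSite a' b') := by
  rw [isStep_iff] at *
  unfold _root_.upperSite
  split_ifs <;> omega

lemma IsPathTo.zipWith {z : Site} {γ η : List Site} {p : Site → Site → Site}
    (hp : ∀ a b, p a b = a ∨ p a b = b)
    (hstep : ∀ {a b a' b'}, a.1 + a.2 = b.1 + b.2 → IsStep a a' → IsStep b b' →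
      IsStep (p a b) (p a' b'))
    (hγ : IsPathTo z γ) (hη : IsPathTo z η) : IsPathTo z (List.zipWith p γ η) := by
  have hl := hγ.length_eq_length hη
  have hlen : (List.zipWith p γ η).length = γ.length := by simp [hl]
  have hdiag (a : Site) : p a a = a := (hp a a).elim id id
  have h0 := hγ.length_pos
  refine ⟨?_, ?_, List.isChain_iff_getElem.2 fun i hi => ?_⟩
  · rw [List.head?_eq_getElem?, List.getElem?_eq_getElem (by omega), List.getElem_zipWith,
      hγ.getElem_zero, hη.getElem_zero, hdiag]
  · rw [List.getLast?_eq_getElem?, List.getElem?_eq_getElem (by omega), List.getElem_zipWith]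
    simp only [hlen, hγ.getElem_length_sub_one]
    simp only [hl, hη.getElem_length_sub_one, hdiag]
  · simp only [List.getElem_zipWith]
    refine hstep ?_ (hγ.isStep_getElem i (by omega)) (hη.isStep_getElem i (by omega))
    rw [hγ.fst_add_snd_getElem, hη.fst_add_snd_getElem]

lemma plen_add (ω ε : Site → ℝ) (γ : List Site) :
    plen (fun s => ω s + ε s) γ = plen ω γ + plen ε γ :=
  List.sum_map_add

lemma plen_zipWith_lowerSite_add_upperSite (f : Site → ℝ) {γ η : List Site}
    (hl : γ.length = η.length) :
    plen f (List.zipWith lowerSite γ η) + plen f (List.zipWith upperSite γ η) =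
      plen f γ + plen f η := by
  induction γ generalizing η with
  | nil => simp [List.eq_nil_of_length_eq_zero hl.symm, plen]
  | cons a γ ih =>
    cases η with
    | nil => simp at hl
    | cons b η =>
      have hab : f (lowerSite a b) + f (upperSite a b) = f a + f b := by
        unfold lowerSite upperSite; split_ifs <;> ring
      simp only [List.zipWith_cons_cons, plen, List.map_cons, List.sum_cons] at ih ⊢
      linarith [ih (by simpa using hl)]

lemma plen_eq_sum_range (f : Site → ℝ) (γ : List Site) :
    plen f γ = ∑ i ∈ Finset.range γ.length, f (γ.getD i (0, 0)) := by
  rw [plen, ← List.ofFn_getElem_eq_map, List.sum_ofFn, ← Fin.sum_univ_eq_sum_range]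
  simp only [List.getD_eq_getElem _ _ (Fin.isLt _)]

lemma plen_lt_plen (f : Site → ℝ) {γ η : List Site} (hl : γ.length = η.length)
    (hle : ∀ i (hiγ : i < γ.length) (hiη : i < η.length), f γ[i] ≤ f η[i])
    (hlt : ∃ i, ∃ (hiγ : i < γ.length) (hiη : i < η.length), f γ[i] < f η[i]) :
    plen f γ < plen f η := by
  rw [plen_eq_sum_range, plen_eq_sum_range, ← hl]
  obtain ⟨i, hiγ, hiη, hi⟩ := hlt
  refine Finset.sum_lt_sum (fun j hj => ?_) ⟨i, Finset.mem_range.2 hiγ, ?_⟩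
  · have hjγ := Finset.mem_range.1 hj
    rw [List.getD_eq_getElem _ _ hjγ, List.getD_eq_getElem _ _ (hl ▸ hjγ)]
    exact hle j hjγ _
  · rwa [List.getD_eq_getElem _ _ hiγ, List.getD_eq_getElem _ _ hiη]

section Optimal

variable {ω : Site → ℝ} {z : Site} {γ η : List Site}

lemma IsOptimal.zipWith_lowerSite (hγ : IsOptimal ω z γ) (hη : IsOptimal ω z η) :
    IsOptimal ω z (List.zipWith lowerSite γ η) := by
  have hlower := hγ.1.zipWith lowerSite_eq_or IsStep.lowerSite hη.1
  have hupper := hγ.1.zipWith upperSite_eq_or IsStep.upperSite hη.1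
  have hsum := plen_zipWith_lowerSite_add_upperSite ω (hγ.1.length_eq_length hη.1)
  have := hγ.2 _ hupper
  have := hγ.2 _ hη.1
  have := hη.2 _ hγ.1
  exact ⟨hlower, fun ξ hξ => by linarith [hγ.2 ξ hξ]⟩

/-- The optimal path of least total height is the low-optimal one: were it not below some
optimal `η`, its pointwise minimum with `η` would be optimal and strictly lower. -/
lemma exists_isLowOptimal (ω : Site → ℝ) {z : Site} (hz : z ∈ posQuad) :
    ∃ γ, IsLowOptimal ω z γ := by
  let height : Site → ℝ := fun s => s.2
  obtain ⟨γ, hγ, hmin⟩ := Set.exists_min_image {γ | IsOptimal ω z γ} (plen height)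
    ((finite_setOf_isPathTo z).subset fun _ h => h.1) (exists_isOptimal ω hz)
  refine ⟨γ, hγ, fun η hη i hiγ hiη => ?_⟩
  by_contra! hlt
  have hμ := hγ.zipWith_lowerSite hη
  have hl : (List.zipWith lowerSite γ η).length = γ.length := by
    simp [hγ.1.length_eq_length hη.1]
  refine (hmin _ hμ).not_gt (plen_lt_plen height hl (fun j _ _ => ?_) ⟨i, by omega, hiγ, ?_⟩)
  · simp only [height, List.getElem_zipWith, snd_lowerSite, Int.cast_le]
    exact min_le_left _ _
  · simp only [height, List.getElem_zipWith, snd_lowerSite, Int.cast_lt]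
    simp only [List.get_eq_getElem] at hlt
    omega

lemma lowOpt_isLowOptimal (ω : Site → ℝ) {z : Site} (hz : z ∈ posQuad) :
    IsLowOptimal ω z (lowOpt ω z) := by
  have h := exists_isLowOptimal ω hz
  rw [lowOpt, dif_pos h]
  exact h.choose_spec

end Optimal

lemma IsLowOptimal.eq_of_plen_le {ω ε : Site → ℝ} {z : Site} {γ η : List Site}
    (hγ : IsLowOptimal ω z γ) (hη : IsLowOptimal (fun s => ω s + ε s) z η)
    (hε : plen ε η ≤ plen ε γ) : η = γ := by
  have hωη := hγ.1.2 η hη.1.1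
  have hωεγ := hη.1.2 γ hγ.1.1
  rw [plen_add, plen_add] at hωεγ
  have hηopt : IsOptimal ω z η := ⟨hη.1.1, fun ξ hξ => by linarith [hγ.1.2 ξ hξ]⟩
  have hγopt : IsOptimal (fun s => ω s + ε s) z γ := ⟨hγ.1.1, fun ξ hξ => by
    have := hη.1.2 ξ hξ
    simp only [plen_add] at this ⊢
    linarith⟩
  exact hη.1.1.below_antisymm hγ.1.1 (hη.2 γ hγopt) (hγ.2 η hηopt)

theorem eps_strict_inequality_general (ω ε : Site → ℝ) (z : Site) (hz : z ∈ posQuad)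
    (hne : lowOpt (fun s => ω s + ε s) z ≠ lowOpt ω z) :
    plen ε (lowOpt ω z) < plen ε (lowOpt (fun s => ω s + ε s) z) :=
  lt_of_not_ge fun hle =>
    hne ((lowOpt_isLowOptimal ω hz).eq_of_plen_le (lowOpt_isLowOptimal _ hz) hle)

/-- If the low-optimal paths `γ_z^{ω+ε}` and `γ_z^ω` are distinct, then
`ε(γ_z^ω) < ε(γ_z^{ω+ε})`. -/
theorem eps_strict_inequality (ω ε : Site → ℝ) (hω : ∀ z : Site, 0 ≤ ω z)
    (hωε : ∀ z : Site, 0 ≤ ω z + ε z) (z : Site) (hz : z ∈ posQuad)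
    (hne : lowOpt (fun s => ω s + ε s) z ≠ lowOpt ω z) :
    plen ε (lowOpt ω z) < plen ε (lowOpt (fun s => ω s + ε s) z) :=
  eps_strict_inequality_general ω ε z hz hne
end
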